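/- arXiv:math/9404208 — 2 statements merged into one kernel-verified Lean document; each statement's English description precedes it below -/
import Mathlib

section
/- Let X be a Banach space, s ∈ ℝ, and x_1,...,x_n ∈ X. Then (1/π ∫_{-π}^{π} ‖Σ_{k=1}^n x_k sin(ks) sin(kt)‖² dt)^{1/2} ≤ (1/π ∫_{-π}^{π} ‖Σ_{k=1}^n x_k cos(kt)‖² dt)^{1/2}. -/
open Real

/-!
By `2 sin ks sin kt = cos k(t - s) - cos k(t + s)`, the sine sum at `t` is half the difference of
the two translates `C (t - s)` and `C (t + s)` of the cosine polynomial `C t = ∑ cos (k t) x_k`.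
Pointwise `‖(a - b) / 2‖² ≤ (‖a‖² + ‖b‖²) / 2`, and since `C` is `2π`-periodic, both translates of
`‖C‖²` have the same integral over a period as `‖C‖²` itself.
-/

section

variable {X : Type*} [NormedAddCommGroup X] [NormedSpace ℝ X]

noncomputable def cosPoly (S : Finset ℕ) (x : ℕ → X) (t : ℝ) : X :=
  ∑ k ∈ S, cos (k * t) • x k

theorem continuous_cosPoly (S : Finset ℕ) (x : ℕ → X) : Continuous (cosPoly S x) := by
  unfold cosPoly
  fun_prop

theorem cosPoly_periodic (S : Finset ℕ) (x : ℕ → X) :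
    Function.Periodic (cosPoly S x) (2 * π) := by
  intro t
  refine Finset.sum_congr rfl fun k _ => ?_
  rw [mul_add, cos_add_nat_mul_two_pi]

theorem sum_sin_mul_sin_smul_eq (S : Finset ℕ) (x : ℕ → X) (s t : ℝ) :
    ∑ k ∈ S, (sin (k * s) * sin (k * t)) • x k =
      (2 : ℝ)⁻¹ • (cosPoly S x (t - s) - cosPoly S x (t + s)) := by
  simp only [cosPoly, mul_sub, mul_add, cos_sub, cos_add, ← Finset.sum_sub_distrib, Finset.smul_sum,
    ← sub_smul, smul_smul]
  refine Finset.sum_congr rfl fun k _ => ?_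
  ring_nf

end

theorem norm_inv_two_smul_sub_sq_le {E : Type*} [SeminormedAddCommGroup E] [NormedSpace ℝ E]
    (a b : E) : ‖(2 : ℝ)⁻¹ • (a - b)‖ ^ 2 ≤ (‖a‖ ^ 2 + ‖b‖ ^ 2) / 2 := by
  have htri : ‖(2 : ℝ)⁻¹ • (a - b)‖ ≤ (‖a‖ + ‖b‖) / 2 := by
    rw [norm_smul, norm_inv, Real.norm_ofNat]
    linarith [norm_sub_le a b]
  nlinarith [norm_nonneg ((2 : ℝ)⁻¹ • (a - b)), sq_nonneg (‖a‖ - ‖b‖)]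

theorem Function.Periodic.intervalIntegral_comp_add_right {E : Type*} [NormedAddCommGroup E]
    [NormedSpace ℝ E] {f : ℝ → E} {T : ℝ}
    (hf : Function.Periodic f T) (a c : ℝ) :
    ∫ t in a..a + T, f (t + c) = ∫ t in a..a + T, f t := by
  rw [intervalIntegral.integral_comp_add_right, add_right_comm, hf.intervalIntegral_add_eq]

theorem Function.Periodic.integral_norm_inv_two_smul_sub_sq_le {E : Type*}
    [SeminormedAddCommGroup E] [NormedSpace ℝ E] {F : ℝ → E} {T : ℝ}
    (hF : Function.Periodic F T) (hFc : Continuous F) (hT : 0 ≤ T) (a s : ℝ) :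
    ∫ t in a..a + T, ‖(2 : ℝ)⁻¹ • (F (t - s) - F (t + s))‖ ^ 2 ≤ ∫ t in a..a + T, ‖F t‖ ^ 2 := by
  set h : ℝ → ℝ := fun t => ‖F t‖ ^ 2
  have hper : Function.Periodic h T := fun t => by simp only [h, hF t]
  have hc : Continuous h := by fun_prop
  have hlhs : Continuous fun t => ‖(2 : ℝ)⁻¹ • (F (t - s) - F (t + s))‖ ^ 2 := by fun_prop
  have hsub : Continuous fun t => h (t - s) := by fun_prop
  have hadd : Continuous fun t => h (t + s) := by fun_prop
  calc ∫ t in a..a + T, ‖(2 : ℝ)⁻¹ • (F (t - s) - F (t + s))‖ ^ 2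
      ≤ ∫ t in a..a + T, (h (t - s) + h (t + s)) / 2 :=
        intervalIntegral.integral_mono_on (by linarith)
          (hlhs.intervalIntegrable _ _)
          (((hsub.add hadd).div_const 2).intervalIntegrable _ _)
          fun t _ => norm_inv_two_smul_sub_sq_le _ _
    _ = ((∫ t in a..a + T, h (t + -s)) + ∫ t in a..a + T, h (t + s)) / 2 := by
        simp only [← sub_eq_add_neg]
        rw [← intervalIntegral.integral_add (hsub.intervalIntegrable _ _)
          (hadd.intervalIntegrable _ _), intervalIntegral.integral_div]
    _ = ∫ t in a..a + T, h t := by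
        rw [hper.intervalIntegral_comp_add_right, hper.intervalIntegral_comp_add_right]
        ring

/-- Lemma 2: `‖(x_k sin ks)|𝒮_n‖ ≤ ‖(x_k)|𝒞_n‖`. -/
theorem stmt3 {X : Type*} [NormedAddCommGroup X] [NormedSpace ℝ X]
    {n : ℕ} (s : ℝ) (x : ℕ → X) :
    Real.sqrt ((1 / π) * ∫ t in (-π)..π,
        ‖∑ k ∈ Finset.Icc 1 n, (Real.sin (k * s) * Real.sin (k * t)) • x k‖ ^ 2) ≤
      Real.sqrt ((1 / π) * ∫ t in (-π)..π,
        ‖∑ k ∈ Finset.Icc 1 n, Real.cos (k * t) • x k‖ ^ 2) := by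
  have key := (cosPoly_periodic (Finset.Icc 1 n) x).integral_norm_inv_two_smul_sub_sq_le
    (continuous_cosPoly _ x) (by positivity) (-π) s
  rw [show -π + 2 * π = π by ring] at key
  simp only [← sum_sin_mul_sin_smul_eq] at key
  gcongr
  exact key
end

section
/- Let X, Y be Banach spaces and T : X → Y bounded linear. Set μ_n(T) = max{ϱ(T|C_n,S_n), ϱ(T|S_n,C_n)}. Then for all x_{−n},...,x_0,...,x_n ∈ X: (1/2π ∫_{-π}^{π} ‖Σ_{k=1}^n T x_k e^{ikt}‖² dt)^{1/2} ≤ 4 μ_n(T) · (1/2π ∫_{-π}^{π} ‖Σ_{|k|≤n} x_k e^{ikt}‖² dt)^{1/2}. -/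
/-!
Write `f(t) = ∑_{|k|≤n} e^{ikt} x_k`, `u_k = x_k + x_{-k}` and `v_k = x_k - x_{-k}`.
Euler's formula gives `f(t) = x₀ + ∑ cos(kt) u_k + i ∑ sin(kt) v_k`, so `f(t) + f(-t)` and
`f(t) - f(-t)` isolate the cosine polynomial of `u` and the sine polynomial of `v`; both have
`L²` norm at most `2 ‖f‖₂`, once one knows `√(2π) ‖x₀‖ ≤ ‖f‖₂` (test `f` against a norming
functional of `x₀`). Since `2 x_k = u_k + v_k`,
`2 ∑_{k ≥ 1} e^{ikt} T x_k = T (f(t) - x₀) + ∑ cos(kt) T v_k + ∑ sin(kt) T (i u_k)`.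
The last two terms are controlled by `ϱ(T|C_n,S_n)` and `ϱ(T|S_n,C_n)`, and the first one by
`‖T‖ ≤ ϱ(T|S_n,C_n)`, which follows by testing a single frequency.
-/

open Real MeasureTheory

section L2

variable {α E : Type*} [MeasurableSpace α] {μ : Measure α} [NormedAddCommGroup E]

noncomputable def l2Norm (μ : Measure α) (g : α → E) : ℝ :=
  √(∫ a, ‖g a‖ ^ 2 ∂μ)

lemma l2Norm_nonneg (g : α → E) : 0 ≤ l2Norm μ g := Real.sqrt_nonneg _

lemma l2Norm_eq_toReal_eLpNorm {g : α → E} (hg : MemLp g 2 μ) :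
    l2Norm μ g = (eLpNorm g 2 μ).toReal := by
  rw [hg.eLpNorm_eq_integral_rpow_norm two_ne_zero ENNReal.ofNat_ne_top,
    ENNReal.toReal_ofReal (by positivity), l2Norm, Real.sqrt_eq_rpow]
  norm_num

lemma l2Norm_add_le {f g : α → E} (hf : MemLp f 2 μ) (hg : MemLp g 2 μ) :
    l2Norm μ (f + g) ≤ l2Norm μ f + l2Norm μ g := by
  rw [l2Norm_eq_toReal_eLpNorm (hf.add hg), l2Norm_eq_toReal_eLpNorm hf,
    l2Norm_eq_toReal_eLpNorm hg]
  exact ENNReal.toReal_le_add (eLpNorm_add_le hf.1 hg.1 one_le_two) hf.eLpNorm_ne_top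
    hg.eLpNorm_ne_top

lemma l2Norm_sub_le {f g : α → E} (hf : MemLp f 2 μ) (hg : MemLp g 2 μ) :
    l2Norm μ (f - g) ≤ l2Norm μ f + l2Norm μ g := by
  rw [l2Norm_eq_toReal_eLpNorm (hf.sub hg), l2Norm_eq_toReal_eLpNorm hf,
    l2Norm_eq_toReal_eLpNorm hg]
  exact ENNReal.toReal_le_add (eLpNorm_sub_le hf.1 hg.1 one_le_two) hf.eLpNorm_ne_top
    hg.eLpNorm_ne_top

lemma l2Norm_le_mul_of_norm_le {F : Type*} [NormedAddCommGroup F] {f : α → E} {g : α → F}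
    {C : ℝ} (hC : 0 ≤ C) (hg : MemLp g 2 μ) (hfg : ∀ a, ‖f a‖ ≤ C * ‖g a‖) :
    l2Norm μ f ≤ C * l2Norm μ g := by
  rw [l2Norm, l2Norm, ← Real.sqrt_sq hC, ← Real.sqrt_mul (sq_nonneg C), ← integral_const_mul]
  refine Real.sqrt_le_sqrt (integral_mono_of_nonneg (ae_of_all _ fun a => by positivity)
    ((hg.integrable_norm_pow two_ne_zero).const_mul _) (ae_of_all _ fun a => ?_))
  simp only [← mul_pow]
  exact pow_le_pow_left₀ (norm_nonneg _) (hfg a) 2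

lemma l2Norm_smul {𝕜 : Type*} [NormedField 𝕜] [NormedSpace 𝕜 E] (c : 𝕜) (g : α → E) :
    l2Norm μ (c • g) = ‖c‖ * l2Norm μ g := by
  simp only [l2Norm, Pi.smul_apply, norm_smul, mul_pow, integral_const_mul]
  rw [Real.sqrt_mul (sq_nonneg _), Real.sqrt_sq (norm_nonneg c)]

lemma l2Norm_smul_const [NormedSpace ℝ E] (φ : α → ℝ) (w : E) :
    l2Norm μ (fun a => φ a • w) = l2Norm μ φ * ‖w‖ := by
  simp only [l2Norm, norm_smul, mul_pow, integral_mul_const]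
  rw [Real.sqrt_mul' _ (sq_nonneg _), Real.sqrt_sq (norm_nonneg w)]

lemma l2Norm_const (z : E) : l2Norm μ (fun _ => z) = √(μ.real Set.univ) * ‖z‖ := by
  rw [l2Norm, integral_const, smul_eq_mul, Real.sqrt_mul measureReal_nonneg,
    Real.sqrt_sq (norm_nonneg z)]

lemma integral_norm_le_sqrt_mul_l2Norm [IsFiniteMeasure μ] {f : α → E} (hf : MemLp f 2 μ) :
    ∫ a, ‖f a‖ ∂μ ≤ √(μ.real Set.univ) * l2Norm μ f := by
  have h := eLpNorm_le_eLpNorm_mul_rpow_measure_univ one_le_two hf.1 (μ := μ)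
  rw [integral_norm_eq_lintegral_enorm hf.1, ← eLpNorm_one_eq_lintegral_enorm,
    l2Norm_eq_toReal_eLpNorm hf, Real.sqrt_eq_rpow, mul_comm, measureReal_def,
    ENNReal.toReal_rpow, ← ENNReal.toReal_mul]
  refine ENNReal.toReal_mono (ENNReal.mul_ne_top hf.eLpNorm_ne_top ?_) ?_
  · exact ENNReal.rpow_ne_top_of_nonneg (by norm_num) (measure_ne_top μ Set.univ)
  · convert h using 3; norm_num

end L2

local notation "μπ" => volume.restrict (Set.Ioc (-π) π)

section Circle

variable {E : Type*} [NormedAddCommGroup E]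

lemma memLp_two_restrict_Ioc {g : ℝ → E} (hg : Continuous g) (a b : ℝ) :
    MemLp g 2 (volume.restrict (Set.Ioc a b)) := by
  obtain ⟨C, hC⟩ :=
    isCompact_Icc.exists_bound_of_continuousOn (hg.continuousOn (s := Set.Icc a b))
  refine MemLp.of_bound hg.aestronglyMeasurable C ?_
  exact (ae_restrict_iff' measurableSet_Ioc).2
    (ae_of_all _ fun t ht => hC t (Set.Ioc_subset_Icc_self ht))

lemma l2Norm_restrict_Ioc {a b : ℝ} (hab : a ≤ b) (g : ℝ → E) :
    l2Norm (volume.restrict (Set.Ioc a b)) g = √(∫ t in a..b, ‖g t‖ ^ 2) := by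
  rw [intervalIntegral.integral_of_le hab, l2Norm]

lemma sqrt_mul_integral_norm_sq {c : ℝ} (hc : 0 ≤ c) (g : ℝ → E) :
    √(c * ∫ t in (-π)..π, ‖g t‖ ^ 2) = √c * l2Norm μπ g := by
  rw [Real.sqrt_mul hc, l2Norm_restrict_Ioc (by linarith [pi_pos])]

lemma l2Norm_comp_neg (g : ℝ → E) : l2Norm μπ (fun t => g (-t)) = l2Norm μπ g := by
  rw [l2Norm_restrict_Ioc (by linarith [pi_pos]), l2Norm_restrict_Ioc (by linarith [pi_pos]),
    intervalIntegral.integral_comp_neg (fun t => ‖g t‖ ^ 2), neg_neg]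

lemma measureReal_Ioc_neg_pi_pi : volume.real (Set.Ioc (-π) π) = 2 * π := by
  rw [Real.volume_real_Ioc_of_le (by linarith [pi_pos])]; ring

lemma l2Norm_circle_const (z : E) : l2Norm μπ (fun _ => z) = √(2 * π) * ‖z‖ := by
  rw [l2Norm_const, measureReal_restrict_apply_univ, measureReal_Ioc_neg_pi_pi]

lemma l2Norm_sin : l2Norm μπ Real.sin = √π := by
  rw [l2Norm_restrict_Ioc (by linarith [pi_pos])]
  simp [integral_sin_sq]

lemma l2Norm_cos : l2Norm μπ Real.cos = √π := by
  rw [l2Norm_restrict_Ioc (by linarith [pi_pos])]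
  simp [integral_cos_sq]

end Circle

section TrigonometricPolynomials

open Finset

lemma sum_Icc_neg_natCast_eq {M : Type*} [AddCommMonoid M] (φ : ℤ → M) :
    ∀ n : ℕ, ∑ k ∈ Icc (-n : ℤ) n, φ k = φ 0 + ∑ k ∈ Icc 1 n, (φ k + φ (-k))
  | 0 => by simp
  | n + 1 => by
    have hIcc : Icc (-(n + 1 : ℕ) : ℤ) (n + 1 : ℕ) =
        insert (-(n + 1 : ℤ)) (insert (n + 1 : ℤ) (Icc (-n : ℤ) n)) := by
      ext k; simp only [mem_Icc, mem_insert]; omega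
    rw [hIcc, sum_insert (by simp only [mem_Icc, mem_insert]; omega),
      sum_insert (by simp only [mem_Icc]; omega), sum_Icc_neg_natCast_eq φ n,
      sum_Icc_succ_top (by omega)]
    push_cast
    abel

lemma sum_Icc_one_natCast_eq {M : Type*} [AddCommMonoid M] (φ : ℤ → M) :
    ∀ n : ℕ, ∑ k ∈ Icc (1 : ℤ) n, φ k = ∑ k ∈ Icc 1 n, φ k
  | 0 => by simp
  | n + 1 => by
    have hIcc : Icc (1 : ℤ) (n + 1 : ℕ) = insert (n + 1 : ℤ) (Icc (1 : ℤ) n) := by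
      ext k; simp only [mem_Icc, mem_insert]; omega
    rw [hIcc, sum_insert (by simp only [mem_Icc]; omega), sum_Icc_one_natCast_eq φ n,
      sum_Icc_succ_top (by omega), add_comm]
    push_cast
    rfl

variable {X Y : Type*} [NormedAddCommGroup X] [NormedSpace ℂ X]
  [NormedAddCommGroup Y] [NormedSpace ℂ Y]

noncomputable def expSum (s : Finset ℤ) (x : ℤ → X) (t : ℝ) : X :=
  ∑ k ∈ s, Complex.exp (Complex.I * ((k : ℝ) * t : ℝ)) • x k

noncomputable def cosSum (n : ℕ) (y : ℕ → X) (t : ℝ) : X :=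
  ∑ k ∈ Icc 1 n, Real.cos (k * t) • y k

noncomputable def sinSum (n : ℕ) (y : ℕ → X) (t : ℝ) : X :=
  ∑ k ∈ Icc 1 n, Real.sin (k * t) • y k

@[fun_prop]
lemma continuous_expSum (s : Finset ℤ) (x : ℤ → X) : Continuous (expSum s x) := by
  unfold expSum; fun_prop

@[fun_prop]
lemma continuous_cosSum (n : ℕ) (y : ℕ → X) : Continuous (cosSum n y) := by
  unfold cosSum; fun_prop

@[fun_prop]
lemma continuous_sinSum (n : ℕ) (y : ℕ → X) : Continuous (sinSum n y) := by
  unfold sinSum; fun_prop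

lemma cosSum_neg (n : ℕ) (y : ℕ → X) (t : ℝ) : cosSum n y (-t) = cosSum n y t := by
  simp only [cosSum, mul_neg, Real.cos_neg]

lemma sinSum_neg (n : ℕ) (y : ℕ → X) (t : ℝ) : sinSum n y (-t) = -sinSum n y t := by
  simp only [sinSum, mul_neg, Real.sin_neg, neg_smul, sum_neg_distrib]

lemma cosSum_const_smul (n : ℕ) (c : ℂ) (y : ℕ → X) :
    cosSum n (fun k => c • y k) = c • cosSum n y := by
  ext t
  simp only [cosSum, Pi.smul_apply, smul_sum, smul_comm c]

lemma exp_mul_I_smul (θ : ℝ) (a : X) :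
    Complex.exp (Complex.I * θ) • a = Real.cos θ • a + Complex.I • Real.sin θ • a := by
  rw [mul_comm, Complex.exp_mul_I, ← Complex.ofReal_cos, ← Complex.ofReal_sin, add_smul,
    mul_comm, mul_smul, Complex.coe_smul, Complex.coe_smul]

lemma expSum_Icc_one (n : ℕ) (x : ℤ → X) (t : ℝ) :
    expSum (Icc 1 n) x t =
      cosSum n (fun k => x k) t + Complex.I • sinSum n (fun k => x k) t := by
  simp only [expSum, cosSum, sinSum, sum_Icc_one_natCast_eq _ n, exp_mul_I_smul, smul_sum,
    sum_add_distrib, Int.cast_natCast]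

lemma expSum_Icc_neg (n : ℕ) (x : ℤ → X) (t : ℝ) :
    expSum (Icc (-n) n) x t = x 0 + cosSum n (fun k => x k + x (-k)) t
      + Complex.I • sinSum n (fun k => x k - x (-k)) t := by
  simp only [expSum, cosSum, sinSum, sum_Icc_neg_natCast_eq _ n, exp_mul_I_smul, smul_sum,
    ← sum_add_distrib, Int.cast_natCast, Int.cast_neg, Int.cast_zero, zero_mul, Real.cos_zero,
    Real.sin_zero, one_smul, zero_smul, smul_zero, add_zero, add_assoc]
  congr 1
  refine sum_congr rfl fun k _ => ?_
  rw [neg_mul, Real.cos_neg, Real.sin_neg]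
  module

lemma two_smul_expSum_Icc_one_map (T : X →L[ℂ] Y) (n : ℕ) (x : ℤ → X) (t : ℝ) :
    (2 : ℝ) • expSum (Icc 1 n) (fun k => T (x k)) t
      = T (expSum (Icc (-n) n) x t - x 0) + cosSum n (fun k => T (x k - x (-k))) t
        + sinSum n (fun k => T (Complex.I • (x k + x (-k)))) t := by
  rw [expSum_Icc_one, expSum_Icc_neg, add_assoc (x 0), add_sub_cancel_left]
  simp only [cosSum, sinSum, map_add, map_sub, map_sum, map_smul,
    ContinuousLinearMap.map_smul_of_tower, smul_sum, ← sum_add_distrib]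
  refine sum_congr rfl fun k _ => ?_
  module

lemma integral_exp_int_mul_I {k : ℤ} (hk : k ≠ 0) :
    ∫ t in (-π)..π, Complex.exp (Complex.I * ((k : ℝ) * t : ℝ)) = 0 := by
  simp_rw [mul_comm Complex.I]
  rw [intervalIntegral.integral_comp_mul_left (fun u : ℝ => Complex.exp (u * Complex.I))
    (Int.cast_ne_zero.2 hk), mul_neg, integral_exp_mul_I_eq_sin, Real.sin_int_mul_pi]
  simp

end TrigonometricPolynomials

section Estimates

open Finset

variable {X Y : Type*} [NormedAddCommGroup X] [NormedSpace ℂ X]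
  [NormedAddCommGroup Y] [NormedSpace ℂ Y]

lemma sqrt_two_pi_mul_norm_le_l2Norm_expSum (n : ℕ) (x : ℤ → X) :
    √(2 * π) * ‖x 0‖ ≤ l2Norm μπ (expSum (Icc (-n) n) x) := by
  obtain ⟨g, hg, hgx⟩ := exists_dual_vector'' ℂ (x 0)
  set f := expSum (Icc (-n : ℤ) n) x
  have hf : Continuous f := continuous_expSum _ x
  have hmean : ∫ t in (-π)..π, g (f t) = (2 * π : ℝ) * ‖x 0‖ := by
    simp only [f, expSum, map_sum, map_smul, smul_eq_mul]
    rw [intervalIntegral.integral_finsetSum fun k _ =>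
      Continuous.intervalIntegrable (by fun_prop) _ _, sum_eq_single_of_mem 0 (by simp)]
    · simp [hgx, ← two_mul]
    · intro k _ hk
      rw [intervalIntegral.integral_mul_const, integral_exp_int_mul_I hk, zero_mul]
  have hle : 2 * π * ‖x 0‖ ≤ √(2 * π) * l2Norm μπ f := calc
    2 * π * ‖x 0‖ = ‖∫ t in (-π)..π, g (f t)‖ := by
      rw [hmean, ← Complex.ofReal_mul, Complex.norm_real, Real.norm_of_nonneg (by positivity)]
    _ ≤ ∫ t, ‖f t‖ ∂μπ := by
      rw [intervalIntegral.integral_of_le (by linarith [pi_pos])]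
      exact norm_integral_le_of_norm_le hf.norm.integrableOn_Ioc
        (ae_of_all _ fun t => (g.le_of_opNorm_le hg _).trans_eq (one_mul _))
    _ ≤ √(2 * π) * l2Norm μπ f := by
      simpa only [measureReal_restrict_apply_univ, measureReal_Ioc_neg_pi_pi] using
        integral_norm_le_sqrt_mul_l2Norm (memLp_two_restrict_Ioc hf (-π) π)
  refine le_of_mul_le_mul_left ?_ (Real.sqrt_pos.2 (by positivity : 0 < 2 * π))
  rwa [← mul_assoc, Real.mul_self_sqrt (by positivity)]

lemma l2Norm_cosSum_even_le (n : ℕ) (x : ℤ → X) :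
    l2Norm μπ (cosSum n fun k => x k + x (-k)) ≤ 2 * l2Norm μπ (expSum (Icc (-n) n) x) := by
  set f := expSum (Icc (-n : ℤ) n) x
  have hf : Continuous f := continuous_expSum _ x
  have hsym : (2 : ℝ) • cosSum n (fun k => x k + x (-k)) =
      (f + fun t => f (-t)) - fun _ => (2 : ℝ) • x 0 := by
    ext t
    simp only [f, Pi.add_apply, Pi.sub_apply, Pi.smul_apply, expSum_Icc_neg, cosSum_neg,
      sinSum_neg]
    module
  have hx0 := sqrt_two_pi_mul_norm_le_l2Norm_expSum n x
  have h2 : 2 * l2Norm μπ (cosSum n fun k => x k + x (-k)) ≤ 4 * l2Norm μπ f := calc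
    _ = l2Norm μπ ((2 : ℝ) • cosSum n (fun k => x k + x (-k))) := by
      rw [l2Norm_smul]; norm_num
    _ = l2Norm μπ ((f + fun t => f (-t)) - fun _ => (2 : ℝ) • x 0) := by rw [hsym]
    _ ≤ l2Norm μπ (f + fun t => f (-t)) + l2Norm μπ (fun _ => (2 : ℝ) • x 0) :=
      l2Norm_sub_le (memLp_two_restrict_Ioc (by fun_prop) _ _)
        (memLp_two_restrict_Ioc continuous_const _ _)
    _ ≤ (l2Norm μπ f + l2Norm μπ fun t => f (-t)) + 2 * (√(2 * π) * ‖x 0‖) := by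
      gcongr
      · exact l2Norm_add_le (memLp_two_restrict_Ioc hf _ _)
          (memLp_two_restrict_Ioc (by fun_prop) _ _)
      · rw [l2Norm_circle_const, norm_smul]
        norm_num
        linarith
    _ ≤ 4 * l2Norm μπ f := by rw [l2Norm_comp_neg]; linarith
  linarith

lemma l2Norm_sinSum_odd_le (n : ℕ) (x : ℤ → X) :
    l2Norm μπ (sinSum n fun k => x k - x (-k)) ≤ l2Norm μπ (expSum (Icc (-n) n) x) := by
  set f := expSum (Icc (-n : ℤ) n) x
  have hf : Continuous f := continuous_expSum _ x
  have hanti : (2 * Complex.I) • sinSum n (fun k => x k - x (-k)) = f - fun t => f (-t) := by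
    ext t
    simp only [f, Pi.sub_apply, Pi.smul_apply, expSum_Icc_neg, cosSum_neg, sinSum_neg]
    module
  have h2 : 2 * l2Norm μπ (sinSum n fun k => x k - x (-k)) ≤ 2 * l2Norm μπ f := calc
    _ = l2Norm μπ ((2 * Complex.I) • sinSum n (fun k => x k - x (-k))) := by
      rw [l2Norm_smul]; norm_num
    _ = l2Norm μπ (f - fun t => f (-t)) := by rw [hanti]
    _ ≤ l2Norm μπ f + l2Norm μπ (fun t => f (-t)) :=
      l2Norm_sub_le (memLp_two_restrict_Ioc hf _ _) (memLp_two_restrict_Ioc (by fun_prop) _ _)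
    _ = 2 * l2Norm μπ f := by rw [l2Norm_comp_neg]; ring
  linarith

lemma norm_apply_le_of_sinSum_le (T : X →L[ℂ] Y) {n : ℕ} (hn : 1 ≤ n) {c : ℝ}
    (h : ∀ y : ℕ → X, l2Norm μπ (sinSum n fun k => T (y k)) ≤ c * l2Norm μπ (cosSum n y))
    (z : X) : ‖T z‖ ≤ c * ‖z‖ := by
  have hone : 1 ∈ Icc 1 n := mem_Icc.2 ⟨le_rfl, hn⟩
  have hz := h (Pi.single 1 z)
  have hcos : cosSum n (Pi.single 1 z) = fun t => Real.cos t • z := by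
    ext t
    simp [cosSum, Pi.single_apply, hone]
  have hsin : (sinSum n fun k => T (Pi.single (M := fun _ => X) 1 z k)) =
      fun t => Real.sin t • T z := by
    ext t
    simp [sinSum, Pi.single_apply, apply_ite T, hone]
  rw [hcos, hsin, l2Norm_smul_const, l2Norm_smul_const, l2Norm_sin, l2Norm_cos] at hz
  refine le_of_mul_le_mul_left ?_ (Real.sqrt_pos.2 pi_pos)
  linarith

theorem l2Norm_expSum_Icc_one_map_le (T : X →L[ℂ] Y) {n : ℕ} {c₁ c₂ : ℝ} (hc₁ : 0 ≤ c₁)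
    (hc₂ : 0 ≤ c₂)
    (h₁ : ∀ y : ℕ → X, l2Norm μπ (cosSum n fun k => T (y k)) ≤ c₁ * l2Norm μπ (sinSum n y))
    (h₂ : ∀ y : ℕ → X, l2Norm μπ (sinSum n fun k => T (y k)) ≤ c₂ * l2Norm μπ (cosSum n y))
    (x : ℤ → X) :
    l2Norm μπ (expSum (Icc 1 n) fun k => T (x k)) ≤
      4 * max c₁ c₂ * l2Norm μπ (expSum (Icc (-n) n) x) := by
  obtain rfl | hn := n.eq_zero_or_pos
  · have hzero : (expSum (Icc 1 (0 : ℕ)) fun k => T (x k)) = 0 := by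
      ext t; simp [expSum]
    rw [hzero, show l2Norm μπ (0 : ℝ → Y) = 0 by simp [l2Norm]]
    exact mul_nonneg (by positivity) (l2Norm_nonneg _)
  set f := expSum (Icc (-n : ℤ) n) x
  set F := l2Norm μπ f
  have hf : Continuous f := continuous_expSum _ x
  have hT := norm_apply_le_of_sinSum_le T hn h₂
  have hx0 := sqrt_two_pi_mul_norm_le_l2Norm_expSum n x
  have hshift : l2Norm μπ (fun t => T (f t - x 0)) ≤ c₂ * (2 * F) := calc
    _ ≤ c₂ * l2Norm μπ (f - fun _ => x 0) :=
      l2Norm_le_mul_of_norm_le hc₂ (memLp_two_restrict_Ioc (by fun_prop) _ _) fun t => hT _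
    _ ≤ c₂ * (F + √(2 * π) * ‖x 0‖) := by
      gcongr
      rw [← l2Norm_circle_const]
      exact l2Norm_sub_le (memLp_two_restrict_Ioc hf _ _)
        (memLp_two_restrict_Ioc continuous_const _ _)
    _ ≤ c₂ * (2 * F) := by gcongr; linarith
  have hodd : l2Norm μπ (cosSum n fun k => T (x k - x (-k))) ≤ c₁ * F :=
    (h₁ _).trans (mul_le_mul_of_nonneg_left (l2Norm_sinSum_odd_le n x) hc₁)
  have heven :
      l2Norm μπ (sinSum n fun k => T (Complex.I • (x k + x (-k)))) ≤ c₂ * (2 * F) := by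
    refine (h₂ _).trans (mul_le_mul_of_nonneg_left ?_ hc₂)
    rw [cosSum_const_smul, l2Norm_smul, Complex.norm_I, one_mul]
    exact l2Norm_cosSum_even_le n x
  have hsplit : (2 : ℝ) • (expSum (Icc 1 n) fun k => T (x k)) =
      (fun t => T (f t - x 0)) + cosSum n (fun k => T (x k - x (-k)))
        + sinSum n (fun k => T (Complex.I • (x k + x (-k)))) :=
    funext (two_smul_expSum_Icc_one_map T n x)
  have h2 : 2 * l2Norm μπ (expSum (Icc 1 n) fun k => T (x k)) ≤ (4 * c₂ + c₁) * F := calc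
    _ = l2Norm μπ ((2 : ℝ) • (expSum (Icc 1 n) fun k => T (x k))) := by
      rw [l2Norm_smul]; norm_num
    _ ≤ l2Norm μπ (fun t => T (f t - x 0))
        + l2Norm μπ (cosSum n (fun k => T (x k - x (-k))))
        + l2Norm μπ (sinSum n (fun k => T (Complex.I • (x k + x (-k))))) := by
      rw [hsplit]
      refine (l2Norm_add_le (memLp_two_restrict_Ioc (by fun_prop) _ _)
        (memLp_two_restrict_Ioc (by fun_prop) _ _)).trans ?_
      gcongr
      exact l2Norm_add_le (memLp_two_restrict_Ioc (by fun_prop) _ _)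
        (memLp_two_restrict_Ioc (by fun_prop) _ _)
    _ ≤ (4 * c₂ + c₁) * F := by linarith
  have hF : 0 ≤ F := l2Norm_nonneg f
  nlinarith [le_max_left c₁ c₂, le_max_right c₁ c₂]

end Estimates

/-- Lemma 7: with `μ_n(T) = max{ϱ(T|𝒞_n,𝒮_n), ϱ(T|𝒮_n,𝒞_n)}` (given via admissible
constants `c₁, c₂`), the analytic part of a trigonometric polynomial satisfies
`‖(Tx_k)|ℰ_n‖ ≤ 4 μ_n(T) ‖(x_k)_{|k|≤n}‖`. -/
theorem stmt16 {X Y : Type*} [NormedAddCommGroup X] [NormedSpace ℂ X]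
    [NormedAddCommGroup Y] [NormedSpace ℂ Y]
    (T : X →L[ℂ] Y) {n : ℕ} (c₁ c₂ : ℝ) (hc₁ : 0 ≤ c₁) (hc₂ : 0 ≤ c₂)
    -- `c₁` is admissible for `ϱ(T|𝒞_n,𝒮_n)`:
    (h₁ : ∀ y : ℕ → X,
      Real.sqrt ((1 / π) * ∫ t in (-π)..π,
          ‖∑ k ∈ Finset.Icc 1 n, Real.cos (k * t) • T (y k)‖ ^ 2) ≤
        c₁ * Real.sqrt ((1 / π) * ∫ t in (-π)..π,
          ‖∑ k ∈ Finset.Icc 1 n, Real.sin (k * t) • y k‖ ^ 2))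
    -- `c₂` is admissible for `ϱ(T|𝒮_n,𝒞_n)`:
    (h₂ : ∀ y : ℕ → X,
      Real.sqrt ((1 / π) * ∫ t in (-π)..π,
          ‖∑ k ∈ Finset.Icc 1 n, Real.sin (k * t) • T (y k)‖ ^ 2) ≤
        c₂ * Real.sqrt ((1 / π) * ∫ t in (-π)..π,
          ‖∑ k ∈ Finset.Icc 1 n, Real.cos (k * t) • y k‖ ^ 2))
    (x : ℤ → X) :
    Real.sqrt ((1 / (2 * π)) * ∫ t in (-π)..π,
        ‖∑ k ∈ Finset.Icc (1 : ℤ) n, Complex.exp (Complex.I * ((k : ℝ) * t : ℝ)) • T (x k)‖ ^ 2) ≤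
      4 * max c₁ c₂ * Real.sqrt ((1 / (2 * π)) * ∫ t in (-π)..π,
        ‖∑ k ∈ Finset.Icc (-(n : ℤ)) n, Complex.exp (Complex.I * ((k : ℝ) * t : ℝ)) • x k‖ ^ 2) := by
  have hπ : 0 < √(1 / π) := Real.sqrt_pos.2 (by positivity)
  simp only [sqrt_mul_integral_norm_sq (by positivity : (0 : ℝ) ≤ 1 / π),
    sqrt_mul_integral_norm_sq (by positivity : (0 : ℝ) ≤ 1 / (2 * π))] at h₁ h₂ ⊢
  have key := l2Norm_expSum_Icc_one_map_le T (n := n) hc₁ hc₂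
    (fun y => le_of_mul_le_mul_left ((h₁ y).trans_eq (mul_left_comm _ _ _)) hπ)
    (fun y => le_of_mul_le_mul_left ((h₂ y).trans_eq (mul_left_comm _ _ _)) hπ) x
  exact (mul_le_mul_of_nonneg_left key (by positivity)).trans_eq (mul_left_comm _ _ _)
end
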